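/- arXiv:1107.0233 — 2 statements merged into one kernel-verified Lean document; each statement's English description precedes it below -/
import Mathlib

section
/- Suppose q > μ and set k* := (γ₂ − γ₁)⁻¹ · log((1 − 1/γ₁)/(1 − 1/γ₂)). Then 0 < k* < ∞, Z(k*) = q·W(k*), and k* is the unique z ∈ (0,∞) satisfying Z(z) = q·W(z). -/
open Real Filter Set MeasureTheory

noncomputable def dlt (σ μ q : ℝ) : ℝ := Real.sqrt ((μ / σ ^ 2 - 1 / 2) ^ 2 + 2 * q / σ ^ 2)

noncomputable def gma (σ μ : ℝ) : ℝ := 1 / 2 - μ / σ ^ 2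

noncomputable def gma1 (σ μ q : ℝ) : ℝ := gma σ μ - dlt σ μ q

noncomputable def gma2 (σ μ q : ℝ) : ℝ := gma σ μ + dlt σ μ q

/-- The scale function `W^{(q)}` of `X_t = (μ - σ²/2) t + σ B_t`. -/
noncomputable def W (σ μ q : ℝ) (x : ℝ) : ℝ :=
  if 0 ≤ x then 2 / (σ ^ 2 * dlt σ μ q) * Real.exp (gma σ μ * x) * Real.sinh (dlt σ μ q * x)
  else 0

/-- The scale function `Z^{(q)}` of `X_t = (μ - σ²/2) t + σ B_t`. -/
noncomputable def Z (σ μ q : ℝ) (x : ℝ) : ℝ :=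
  if 0 ≤ x then
    Real.exp (gma σ μ * x) * Real.cosh (dlt σ μ q * x)
      - gma σ μ / dlt σ μ q * Real.exp (gma σ μ * x) * Real.sinh (dlt σ μ q * x)
  else 1

/-- `k* = (γ₂ - γ₁)⁻¹ log((1 - 1/γ₁)/(1 - 1/γ₂))`. -/
noncomputable def kstar (σ μ q : ℝ) : ℝ :=
  (gma2 σ μ q - gma1 σ μ q)⁻¹ *
    Real.log ((1 - 1 / gma1 σ μ q) / (1 - 1 / gma2 σ μ q))

lemma hd_pos (σ μ q : ℝ) (hσ : 0 < σ) (hq : 0 < q) : 0 < dlt σ μ q :=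
  Real.sqrt_pos.mpr (by positivity)

lemma hd_sq (σ μ q : ℝ) (hσ : 0 < σ) (hq : 0 < q) :
    dlt σ μ q ^ 2 = gma σ μ ^ 2 + 2 * q / σ ^ 2 := by
  rw [dlt, Real.sq_sqrt (by positivity), gma]; ring

lemma hg1_neg (σ μ q : ℝ) (hσ : 0 < σ) (hq : 0 < q) : gma σ μ - dlt σ μ q < 0 := by
  have hd := hd_pos σ μ q hσ hq
  have hd2 := hd_sq σ μ q hσ hq
  have h2q : 0 < 2 * q / σ ^ 2 := by positivity
  nlinarith

lemma hg2_gt (σ μ q : ℝ) (hσ : 0 < σ) (hq : 0 < q) (hqμ : μ < q) :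
    1 < gma σ μ + dlt σ μ q := by
  have hd := hd_pos σ μ q hσ hq
  have hd2 := hd_sq σ μ q hσ hq
  have hs : (0:ℝ) < σ ^ 2 := by positivity
  have hQ : 0 < 2 * q / σ ^ 2 + 2 * gma σ μ - 1 := by
    have h : 2 * q / σ ^ 2 + 2 * gma σ μ - 1 = 2 * (q - μ) / σ ^ 2 := by rw [gma]; ring
    rw [h]; exact div_pos (by linarith) hs
  nlinarith

lemma key (σ μ q : ℝ) (hσ : 0 < σ) (hq : 0 < q) (hqμ : μ < q) {z : ℝ} (hz : 0 ≤ z) :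
    (Z σ μ q z = q * W σ μ q z ↔
      Real.exp (dlt σ μ q * z) ^ 2 = (1 - 1 / gma1 σ μ q) / (1 - 1 / gma2 σ μ q)) := by
  have hs : (0:ℝ) < σ ^ 2 := by positivity
  have hd := hd_pos σ μ q hσ hq
  have hd2 := hd_sq σ μ q hσ hq
  have hg1 := hg1_neg σ μ q hσ hq
  have hg2 := hg2_gt σ μ q hσ hq hqμ
  simp only [Z, W, gma1, gma2, if_pos hz]
  rw [Real.cosh_eq, Real.sinh_eq, Real.exp_neg]
  set d := dlt σ μ q with hd_def
  set g := gma σ μ with hg_def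
  set A := Real.exp (g * z) with hA_def
  set E := Real.exp (d * z) with hE_def
  have hApos : 0 < A := Real.exp_pos _
  have hEpos : 0 < E := Real.exp_pos _
  have hqe : q = σ ^ 2 * (d ^ 2 - g ^ 2) / 2 := by rw [hd2]; field_simp; ring
  have hg1ne : g - d ≠ 0 := ne_of_lt hg1
  have hg2pos : (0:ℝ) < g + d := by linarith
  have hg2m1 : (0:ℝ) < g + d - 1 := by linarith
  have hDne : (g - d) * ((g + d) - 1) ≠ 0 := mul_ne_zero hg1ne (ne_of_gt hg2m1)
  have hden : (0:ℝ) < 1 - 1 / (g + d) := by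
    have : 1 / (g + d) < 1 := by rw [div_lt_one hg2pos]; linarith
    linarith
  have hRr : (1 - 1 / (g - d)) / (1 - 1 / (g + d))
      = ((g + d) * ((g - d) - 1)) / ((g - d) * ((g + d) - 1)) := by
    rw [div_eq_div_iff (ne_of_gt hden) hDne]
    field_simp
  have hfac : A * ((E + E⁻¹) / 2) - g / d * A * ((E - E⁻¹) / 2)
        - q * (2 / (σ ^ 2 * d) * A * ((E - E⁻¹) / 2))
      = A / (2 * d * E) * (E ^ 2 * ((g - d) * ((g + d) - 1)) - (g + d) * ((g - d) - 1)) := by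
    rw [hqe]
    field_simp
    ring
  have hcoef : A / (2 * d * E) ≠ 0 := ne_of_gt (by positivity)
  constructor
  · intro h
    have h0 : A / (2 * d * E) * (E ^ 2 * ((g - d) * ((g + d) - 1)) - (g + d) * ((g - d) - 1))
        = 0 := by rw [← hfac, h, sub_self]
    have hEDN := (mul_eq_zero.mp h0).resolve_left hcoef
    rw [hRr, eq_div_iff hDne]
    linarith
  · intro h
    rw [hRr, eq_div_iff hDne] at h
    have hEDN : E ^ 2 * ((g - d) * ((g + d) - 1)) - (g + d) * ((g - d) - 1) = 0 := by linarith
    rw [hEDN, mul_zero] at hfac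
    linarith

theorem stmt_8 (σ μ q : ℝ) (hσ : 0 < σ) (hq : 0 < q) (hqμ : μ < q) :
    0 < kstar σ μ q ∧
    Z σ μ q (kstar σ μ q) = q * W σ μ q (kstar σ μ q) ∧
    ∀ z : ℝ, 0 < z → Z σ μ q z = q * W σ μ q z → z = kstar σ μ q := by
  have hd := hd_pos σ μ q hσ hq
  have hg1 := hg1_neg σ μ q hσ hq
  have hg2 := hg2_gt σ μ q hσ hq hqμ
  set d := dlt σ μ q with hd_def
  set g := gma σ μ with hg_def
  have hg1' : gma1 σ μ q = g - d := rfl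
  have hg2' : gma2 σ μ q = g + d := rfl
  have hg2pos : (0:ℝ) < g + d := by linarith
  have h1lt : 1 < 1 - 1 / (g - d) := by
    have : 1 / (g - d) < 0 := div_neg_of_pos_of_neg one_pos hg1
    linarith
  have hden : 0 < 1 - 1 / (g + d) := by
    have : 1 / (g + d) < 1 := by rw [div_lt_one hg2pos]; linarith
    linarith
  have hden1 : 1 - 1 / (g + d) < 1 := by
    have : 0 < 1 / (g + d) := by positivity
    linarith
  have hR : 1 < (1 - 1 / (g - d)) / (1 - 1 / (g + d)) := by
    rw [lt_div_iff₀ hden]; linarith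
  have hRpos : 0 < (1 - 1 / (g - d)) / (1 - 1 / (g + d)) := by linarith
  have hk : kstar σ μ q = (2 * d)⁻¹ * Real.log ((1 - 1 / (g - d)) / (1 - 1 / (g + d))) := by
    rw [kstar, hg1', hg2']; ring_nf
  have hkpos : 0 < kstar σ μ q := by
    rw [hk]
    exact mul_pos (inv_pos.mpr (by linarith)) (Real.log_pos hR)
  have hexpk : Real.exp (d * kstar σ μ q) ^ 2
      = (1 - 1 / gma1 σ μ q) / (1 - 1 / gma2 σ μ q) := by
    rw [hg1', hg2', sq, ← Real.exp_add,
      show d * kstar σ μ q + d * kstar σ μ q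
          = Real.log ((1 - 1 / (g - d)) / (1 - 1 / (g + d))) by
        rw [hk]; field_simp; ring,
      Real.exp_log hRpos]
  refine ⟨hkpos, (key σ μ q hσ hq hqμ hkpos.le).mpr hexpk, fun z hz hZ => ?_⟩
  have hez := (key σ μ q hσ hq hqμ hz.le).mp hZ
  have : Real.exp (d * z) = Real.exp (d * kstar σ μ q) := by
    have h2 : Real.exp (d * z) ^ 2 = Real.exp (d * kstar σ μ q) ^ 2 := by rw [hez, hexpk]
    nlinarith [Real.exp_pos (d * z), Real.exp_pos (d * kstar σ μ q)]
  have := Real.exp_eq_exp.mp this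
  exact mul_left_cancel₀ (ne_of_gt hd) this
end

section
/- Suppose q > μ and fix ε ∈ ℝ. The function H : (0, k*) → ℝ defined by H(s) := ε + ∫₀^s q·W(η)/(q·W(η) − Z(η)) dη is well defined, continuously differentiable and strictly decreasing on (0, k*), satisfies lim_{s↓0} H(s) = ε and lim_{s↑k*} H(s) = −∞, and hence is a bijection from (0, k*) onto (−∞, ε). -/
open Real Filter Set MeasureTheory

/-- The function `H(s) = ε + ∫₀ˢ q W(η) / (q W(η) - Z(η)) dη`. -/
noncomputable def Hfun (σ μ q ε : ℝ) (s : ℝ) : ℝ :=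
  ε + ∫ η in (0 : ℝ)..s, q * W σ μ q η / (q * W σ μ q η - Z σ μ q η)

/-! Writing `a = γ₁ < 0` and `b = γ₂ > 1` (the latter because `q > μ`), both `q W` and `Z` are
combinations of `e^{a x}` and `e^{b x}` on `[0, ∞)`, and the integrand becomes
`a b (e^{b x} - e^{a x}) / D(x)` with `D(x) = b (1 - a) e^{a x} + a (b - 1) e^{b x}`.
The function `D` is strictly decreasing and vanishes exactly at `k*`, and the integrand has the
explicit primitive `(log D(x) - a b x) / ((b - 1) (1 - a))`. Hence `H` is smooth on `[0, k*)`,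
strictly decreasing because the integrand is negative there, and tends to `-∞` at `k*` because
`log D` does; the intermediate value theorem gives the bijection. -/

open Topology

-- For `a = γ₁`, `b = γ₂` and `x ≥ 0`: `expDen a b x = (b - a) (Z - q W)(x)` and
-- `expRatio a b x = q W(x) / (q W(x) - Z(x))`; `expDenRoot γ₁ γ₂` unfolds to `kstar`.
noncomputable def expDen (a b x : ℝ) : ℝ := b * (1 - a) * exp (a * x) + a * (b - 1) * exp (b * x)

noncomputable def expDenRoot (a b : ℝ) : ℝ := (b - a)⁻¹ * log ((1 - 1 / a) / (1 - 1 / b))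

noncomputable def expRatio (a b x : ℝ) : ℝ := a * b * (exp (b * x) - exp (a * x)) / expDen a b x

noncomputable def expRatioPrimitive (a b x : ℝ) : ℝ :=
  (log (expDen a b x) - a * b * x) / ((b - 1) * (1 - a))

section

variable {a b : ℝ}

lemma continuous_expDen : Continuous (expDen a b) := by
  unfold expDen; fun_prop

lemma contDiff_expDen {n : WithTop ℕ∞} : ContDiff ℝ n (expDen a b) := by
  unfold expDen; fun_prop

lemma expDen_zero : expDen a b 0 = b - a := by
  simp only [expDen, mul_zero, exp_zero]; ring

lemma hasDerivAt_expDen (x : ℝ) :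
    HasDerivAt (expDen a b) (a * b * ((1 - a) * exp (a * x) + (b - 1) * exp (b * x))) x := by
  have h₁ := ((hasDerivAt_id x).const_mul a).exp.const_mul (b * (1 - a))
  have h₂ := ((hasDerivAt_id x).const_mul b).exp.const_mul (a * (b - 1))
  exact (h₁.add h₂).congr_deriv (by simp only [id, mul_one]; ring)

lemma strictAnti_expDen (ha : a < 0) (hb : 1 < b) : StrictAnti (expDen a b) := by
  intro x y hxy
  have h₁ : exp (a * y) < exp (a * x) := exp_lt_exp.2 (mul_lt_mul_of_neg_left hxy ha)
  have h₂ : exp (b * x) < exp (b * y) := exp_lt_exp.2 (mul_lt_mul_of_pos_left hxy (by linarith))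
  have hc₁ : 0 < b * (1 - a) := mul_pos (by linarith) (by linarith)
  have hc₂ : a * (b - 1) < 0 := mul_neg_of_neg_of_pos ha (by linarith)
  simp only [expDen]
  nlinarith [mul_lt_mul_of_pos_left h₁ hc₁, mul_lt_mul_of_neg_left h₂ hc₂]

lemma expDen_expDenRoot (ha : a < 0) (hb : 1 < b) : expDen a b (expDenRoot a b) = 0 := by
  set r := expDenRoot a b
  have hρ : 0 < (1 - 1 / a) / (1 - 1 / b) := by
    apply div_pos
    · have : 1 / a < 0 := one_div_neg.2 ha; linarith
    · have : 1 / b < 1 := (div_lt_one (by linarith)).2 hb; linarith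
  have hbr : exp (b * r) = exp (a * r) * ((1 - 1 / a) / (1 - 1 / b)) := by
    have : b * r = a * r + log ((1 - 1 / a) / (1 - 1 / b)) := by
      simp only [r, expDenRoot]; field_simp [show b - a ≠ 0 by linarith]; ring
    rw [this, exp_add, exp_log hρ]
  rw [expDen, hbr]
  field_simp [ha.ne, show b - 1 ≠ 0 by linarith, show b ≠ 0 by linarith]
  ring

lemma expDen_pos (ha : a < 0) (hb : 1 < b) {x : ℝ} (hx : x < expDenRoot a b) :
    0 < expDen a b x :=
  expDen_expDenRoot ha hb ▸ strictAnti_expDen ha hb hx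

lemma expDenRoot_pos (ha : a < 0) (hb : 1 < b) : 0 < expDenRoot a b := by
  rw [← (strictAnti_expDen ha hb).lt_iff_gt, expDen_expDenRoot ha hb, expDen_zero]
  linarith

lemma hasDerivAt_expRatioPrimitive (ha : a ≠ 1) (hb : b ≠ 1) {x : ℝ} (hx : expDen a b x ≠ 0) :
    HasDerivAt (expRatioPrimitive a b) (expRatio a b x) x := by
  have h := (((hasDerivAt_expDen x).log hx).sub ((hasDerivAt_id x).const_mul (a * b))).div_const
    ((b - 1) * (1 - a))
  refine h.congr_deriv ?_
  rw [expRatio, div_eq_div_iff (mul_ne_zero (sub_ne_zero.2 hb) (sub_ne_zero.2 ha.symm)) hx]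
  field_simp
  simp only [expDen]
  ring

lemma hasDerivAt_expRatioPrimitive_of_lt (ha : a < 0) (hb : 1 < b) {x : ℝ}
    (hx : x < expDenRoot a b) : HasDerivAt (expRatioPrimitive a b) (expRatio a b x) x :=
  hasDerivAt_expRatioPrimitive (by linarith) hb.ne' (expDen_pos ha hb hx).ne'

lemma continuousOn_expRatio (ha : a < 0) (hb : 1 < b) :
    ContinuousOn (expRatio a b) (Iio (expDenRoot a b)) := by
  refine ContinuousOn.div (by fun_prop) continuous_expDen.continuousOn fun x hx => ?_
  exact (expDen_pos ha hb hx).ne'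

lemma contDiffOn_expRatioPrimitive (ha : a < 0) (hb : 1 < b) {n : WithTop ℕ∞} :
    ContDiffOn ℝ n (expRatioPrimitive a b) (Iio (expDenRoot a b)) := by
  have hlog : ContDiffOn ℝ n (fun x => log (expDen a b x)) (Iio (expDenRoot a b)) :=
    contDiff_expDen.contDiffOn.log fun x hx => (expDen_pos ha hb hx).ne'
  exact (hlog.sub (by fun_prop)).div_const _

lemma integral_expRatio (ha : a < 0) (hb : 1 < b) {s : ℝ} (hs : s < expDenRoot a b) :
    ∫ x in (0 : ℝ)..s, expRatio a b x = expRatioPrimitive a b s - expRatioPrimitive a b 0 := by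
  have hsub : uIcc 0 s ⊆ Iio (expDenRoot a b) := fun x hx =>
    hx.2.trans_lt (max_lt (expDenRoot_pos ha hb) hs)
  exact intervalIntegral.integral_eq_sub_of_hasDerivAt
    (fun x hx => hasDerivAt_expRatioPrimitive_of_lt ha hb (hsub hx))
    ((continuousOn_expRatio ha hb).mono hsub).intervalIntegrable

lemma expRatio_neg (ha : a < 0) (hb : 1 < b) {x : ℝ} (hx₀ : 0 < x) (hx : x < expDenRoot a b) :
    expRatio a b x < 0 := by
  have hab : a * b < 0 := mul_neg_of_neg_of_pos ha (by linarith)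
  have hexp : exp (a * x) < exp (b * x) := exp_lt_exp.2 (by nlinarith)
  exact div_neg_of_neg_of_pos (mul_neg_of_neg_of_pos hab (sub_pos.2 hexp)) (expDen_pos ha hb hx)

lemma strictAntiOn_expRatioPrimitive (ha : a < 0) (hb : 1 < b) :
    StrictAntiOn (expRatioPrimitive a b) (Ico 0 (expDenRoot a b)) := by
  refine strictAntiOn_of_deriv_neg (convex_Ico _ _)
    ((contDiffOn_expRatioPrimitive ha hb (n := 0)).continuousOn.mono Ico_subset_Iio_self)
    fun x hx => ?_
  rw [interior_Ico] at hx
  rw [(hasDerivAt_expRatioPrimitive_of_lt ha hb hx.2).deriv]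
  exact expRatio_neg ha hb hx.1 hx.2

lemma tendsto_expRatioPrimitive_expDenRoot (ha : a < 0) (hb : 1 < b) :
    Tendsto (expRatioPrimitive a b) (𝓝[<] expDenRoot a b) atBot := by
  have hden : Tendsto (expDen a b) (𝓝[<] expDenRoot a b) (𝓝[>] 0) := by
    refine tendsto_nhdsWithin_of_tendsto_nhds_of_eventually_within _ ?_ ?_
    · have h := (continuous_expDen (a := a) (b := b)).tendsto (expDenRoot a b)
      rw [expDen_expDenRoot ha hb] at h
      exact h.mono_left nhdsWithin_le_nhds
    · filter_upwards [self_mem_nhdsWithin] with x hx using expDen_pos ha hb hx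
  have hlin : Tendsto (fun x => -(a * b * x)) (𝓝[<] expDenRoot a b)
      (𝓝 (-(a * b * expDenRoot a b))) :=
    ((continuous_const.mul continuous_id).neg.tendsto _).mono_left nhdsWithin_le_nhds
  exact ((tendsto_log_nhdsGT_zero.comp hden).atBot_add hlin).atBot_div_const
    (mul_pos (by linarith) (by linarith))

end

lemma bijOn_Ioo_Iio_of_strictAntiOn {α δ : Type*} [ConditionallyCompleteLinearOrder α]
    [TopologicalSpace α] [OrderTopology α] [DenselyOrdered α] [LinearOrder δ] [TopologicalSpace δ]
    [OrderClosedTopology δ] {f : α → δ} {a b : α} (hab : a < b) (hf : StrictAntiOn f (Ico a b))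
    (hfc : ContinuousOn f (Ico a b)) (hfb : Tendsto f (𝓝[<] b) atBot) :
    BijOn f (Ioo a b) (Iio (f a)) := by
  refine ⟨fun x hx => hf ⟨le_rfl, hab⟩ (Ioo_subset_Ico_self hx) hx.1,
    hf.injOn.mono Ioo_subset_Ico_self, fun y hy => ?_⟩
  have := nhdsLT_neBot_of_exists_lt ⟨a, hab⟩
  obtain ⟨c, hcy, hc⟩ := ((hfb.eventually (eventually_le_atBot y)).and
    (Ioo_mem_nhdsLT hab)).exists
  obtain ⟨x, hx, rfl⟩ := intermediate_value_Ioc' hc.1.le (hfc.mono (Icc_subset_Ico_right hc.2))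
    ⟨hcy, hy⟩
  exact ⟨x, ⟨hx.1, hx.2.trans_lt hc.2⟩, rfl⟩

section

variable {σ μ q : ℝ}

lemma dlt_sq (hσ : σ ≠ 0) (hq : 0 ≤ q) : dlt σ μ q ^ 2 = gma σ μ ^ 2 + 2 * q / σ ^ 2 := by
  rw [dlt, sq_sqrt (by positivity), gma]; ring

lemma dlt_pos (hσ : σ ≠ 0) (hq : 0 < q) : 0 < dlt σ μ q :=
  sqrt_pos.2 (by positivity)

lemma gma1_mul_gma2 (hσ : σ ≠ 0) (hq : 0 ≤ q) : gma1 σ μ q * gma2 σ μ q = -(2 * q / σ ^ 2) := by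
  have := dlt_sq (μ := μ) hσ hq
  rw [gma1, gma2]; linear_combination -this

lemma one_sub_gma1_mul_one_sub_gma2 (hσ : σ ≠ 0) (hq : 0 ≤ q) :
    (1 - gma1 σ μ q) * (1 - gma2 σ μ q) = 2 * (μ - q) / σ ^ 2 := by
  have := gma1_mul_gma2 (μ := μ) hσ hq
  have hsum : gma1 σ μ q + gma2 σ μ q = 1 - 2 * μ / σ ^ 2 := by rw [gma1, gma2, gma]; ring
  linear_combination this - hsum

lemma gma1_lt_gma2 (hσ : σ ≠ 0) (hq : 0 < q) : gma1 σ μ q < gma2 σ μ q := by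
  have := dlt_pos (μ := μ) hσ hq
  rw [gma1, gma2]; linarith

lemma gma1_neg (hσ : σ ≠ 0) (hq : 0 < q) : gma1 σ μ q < 0 := by
  have hprod : gma1 σ μ q * gma2 σ μ q < 0 := by
    rw [gma1_mul_gma2 hσ hq.le]; exact neg_neg_of_pos (by positivity)
  by_contra! h
  nlinarith [gma1_lt_gma2 (μ := μ) hσ hq]

lemma one_lt_gma2 (hσ : σ ≠ 0) (hq : 0 < q) (hqμ : μ < q) : 1 < gma2 σ μ q := by
  have hprod : (1 - gma1 σ μ q) * (1 - gma2 σ μ q) < 0 := by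
    rw [one_sub_gma1_mul_one_sub_gma2 hσ hq.le]
    exact div_neg_of_neg_of_pos (by linarith) (by positivity)
  by_contra! h
  nlinarith [gma1_lt_gma2 (μ := μ) hσ hq]

lemma gma2_sub_gma1 : gma2 σ μ q - gma1 σ μ q = 2 * dlt σ μ q := by
  rw [gma1, gma2]; ring

lemma exp_gma1_mul (x : ℝ) :
    exp (gma1 σ μ q * x) = exp (gma σ μ * x) * exp (-(dlt σ μ q * x)) := by
  rw [gma1, sub_mul, sub_eq_add_neg, exp_add]

lemma exp_gma2_mul (x : ℝ) : exp (gma2 σ μ q * x) = exp (gma σ μ * x) * exp (dlt σ μ q * x) := by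
  rw [gma2, add_mul, exp_add]

lemma q_mul_W_eq (hσ : σ ≠ 0) (hq : 0 < q) {x : ℝ} (hx : 0 ≤ x) :
    q * W σ μ q x = -(gma1 σ μ q * gma2 σ μ q) *
      (exp (gma2 σ μ q * x) - exp (gma1 σ μ q * x)) / (gma2 σ μ q - gma1 σ μ q) := by
  have hd := (dlt_pos (μ := μ) hσ hq).ne'
  rw [gma1_mul_gma2 hσ hq.le, gma2_sub_gma1, exp_gma1_mul, exp_gma2_mul, W, if_pos hx, sinh_eq]
  field_simp

lemma Z_eq (hσ : σ ≠ 0) (hq : 0 < q) {x : ℝ} (hx : 0 ≤ x) :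
    Z σ μ q x = (gma2 σ μ q * exp (gma1 σ μ q * x) - gma1 σ μ q * exp (gma2 σ μ q * x)) /
      (gma2 σ μ q - gma1 σ μ q) := by
  have hd := (dlt_pos (μ := μ) hσ hq).ne'
  rw [gma2_sub_gma1, exp_gma1_mul, exp_gma2_mul, Z, if_pos hx, sinh_eq, cosh_eq, gma1, gma2]
  field_simp
  ring

lemma q_mul_W_sub_Z_eq (hσ : σ ≠ 0) (hq : 0 < q) {x : ℝ} (hx : 0 ≤ x) :
    q * W σ μ q x - Z σ μ q x =
      -expDen (gma1 σ μ q) (gma2 σ μ q) x / (gma2 σ μ q - gma1 σ μ q) := by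
  rw [q_mul_W_eq hσ hq hx, Z_eq hσ hq hx, expDen]
  ring

lemma integrand_eq_expRatio (hσ : σ ≠ 0) (hq : 0 < q) {x : ℝ} (hx : 0 ≤ x) :
    q * W σ μ q x / (q * W σ μ q x - Z σ μ q x) = expRatio (gma1 σ μ q) (gma2 σ μ q) x := by
  rw [q_mul_W_sub_Z_eq hσ hq hx, q_mul_W_eq hσ hq hx,
    div_div_div_cancel_right₀ (sub_pos.2 (gma1_lt_gma2 hσ hq)).ne', neg_mul, neg_div_neg_eq,
    expRatio]

lemma kstar_pos (hσ : σ ≠ 0) (hq : 0 < q) (hqμ : μ < q) : 0 < kstar σ μ q :=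
  expDenRoot_pos (gma1_neg hσ hq) (one_lt_gma2 hσ hq hqμ)

lemma intervalIntegrable_integrand (hσ : σ ≠ 0) (hq : 0 < q) (hqμ : μ < q) {s : ℝ}
    (hs₀ : 0 ≤ s) (hs : s < kstar σ μ q) :
    IntervalIntegrable (fun η => q * W σ μ q η / (q * W σ μ q η - Z σ μ q η)) volume 0 s := by
  refine ContinuousOn.intervalIntegrable ?_
  rw [uIcc_of_le hs₀]
  exact ((continuousOn_expRatio (gma1_neg hσ hq) (one_lt_gma2 hσ hq hqμ)).mono
    fun x hx => hx.2.trans_lt hs).congr fun x hx => integrand_eq_expRatio hσ hq hx.1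

lemma Hfun_zero (ε : ℝ) : Hfun σ μ q ε 0 = ε := by
  rw [Hfun, intervalIntegral.integral_same, add_zero]

lemma Hfun_eqOn (ε : ℝ) (hσ : σ ≠ 0) (hq : 0 < q) (hqμ : μ < q) :
    EqOn (Hfun σ μ q ε) (fun s => ε + (expRatioPrimitive (gma1 σ μ q) (gma2 σ μ q) s -
      expRatioPrimitive (gma1 σ μ q) (gma2 σ μ q) 0)) (Ico 0 (kstar σ μ q)) := by
  intro s hs
  rw [Hfun, intervalIntegral.integral_congr fun x hx => integrand_eq_expRatio hσ hq
    (uIcc_of_le hs.1 ▸ hx).1, integral_expRatio (gma1_neg hσ hq) (one_lt_gma2 hσ hq hqμ) hs.2]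

lemma continuousOn_Hfun (ε : ℝ) (hσ : σ ≠ 0) (hq : 0 < q) (hqμ : μ < q) :
    ContinuousOn (Hfun σ μ q ε) (Ico 0 (kstar σ μ q)) :=
  ((continuousOn_const.add ((contDiffOn_expRatioPrimitive (gma1_neg hσ hq)
    (one_lt_gma2 hσ hq hqμ) (n := 0)).continuousOn.sub continuousOn_const)).mono
    Ico_subset_Iio_self).congr (Hfun_eqOn ε hσ hq hqμ)

lemma contDiffOn_Hfun (ε : ℝ) (hσ : σ ≠ 0) (hq : 0 < q) (hqμ : μ < q) :
    ContDiffOn ℝ 1 (Hfun σ μ q ε) (Ioo 0 (kstar σ μ q)) :=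
  ((contDiffOn_const.add ((contDiffOn_expRatioPrimitive (gma1_neg hσ hq)
    (one_lt_gma2 hσ hq hqμ)).sub contDiffOn_const)).mono Ioo_subset_Iio_self).congr
    ((Hfun_eqOn ε hσ hq hqμ).mono Ioo_subset_Ico_self)

lemma strictAntiOn_Hfun (ε : ℝ) (hσ : σ ≠ 0) (hq : 0 < q) (hqμ : μ < q) :
    StrictAntiOn (Hfun σ μ q ε) (Ico 0 (kstar σ μ q)) := by
  intro x hx y hy hxy
  have := strictAntiOn_expRatioPrimitive (gma1_neg hσ hq) (one_lt_gma2 hσ hq hqμ) hx hy hxy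
  rw [Hfun_eqOn ε hσ hq hqμ hx, Hfun_eqOn ε hσ hq hqμ hy]
  linarith

lemma tendsto_Hfun_zero (ε : ℝ) (hσ : σ ≠ 0) (hq : 0 < q) (hqμ : μ < q) :
    Tendsto (Hfun σ μ q ε) (𝓝[>] 0) (𝓝 ε) := by
  have hk := kstar_pos hσ hq hqμ
  have h := ((continuousOn_Hfun ε hσ hq hqμ).continuousWithinAt ⟨le_rfl, hk⟩)
    |>.mono_of_mem_nhdsWithin (mem_of_superset (Ioo_mem_nhdsGT hk) Ioo_subset_Ico_self)
  rwa [ContinuousWithinAt, Hfun_zero] at h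

lemma tendsto_Hfun_kstar (ε : ℝ) (hσ : σ ≠ 0) (hq : 0 < q) (hqμ : μ < q) :
    Tendsto (Hfun σ μ q ε) (𝓝[<] kstar σ μ q) atBot := by
  have h : Tendsto (fun s => ε + (expRatioPrimitive (gma1 σ μ q) (gma2 σ μ q) s -
      expRatioPrimitive (gma1 σ μ q) (gma2 σ μ q) 0)) (𝓝[<] kstar σ μ q) atBot :=
    tendsto_atBot_add_const_left _ ε (tendsto_atBot_add_const_right _ _
      (tendsto_expRatioPrimitive_expDenRoot (gma1_neg hσ hq) (one_lt_gma2 hσ hq hqμ)))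
  refine h.congr' ?_
  filter_upwards [Ioo_mem_nhdsLT (kstar_pos hσ hq hqμ)] with s hs
  exact (Hfun_eqOn ε hσ hq hqμ ⟨hs.1.le, hs.2⟩).symm

end

theorem stmt_10 (σ μ q ε : ℝ) (hσ : 0 < σ) (hq : 0 < q) (hqμ : μ < q) :
    (∀ s ∈ Set.Ioo (0 : ℝ) (kstar σ μ q),
      IntervalIntegrable (fun η => q * W σ μ q η / (q * W σ μ q η - Z σ μ q η))
        MeasureTheory.volume 0 s) ∧
    ContDiffOn ℝ 1 (Hfun σ μ q ε) (Set.Ioo 0 (kstar σ μ q)) ∧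
    StrictAntiOn (Hfun σ μ q ε) (Set.Ioo 0 (kstar σ μ q)) ∧
    Filter.Tendsto (Hfun σ μ q ε) (nhdsWithin 0 (Set.Ioi 0)) (nhds ε) ∧
    Filter.Tendsto (Hfun σ μ q ε) (nhdsWithin (kstar σ μ q) (Set.Iio (kstar σ μ q)))
      Filter.atBot ∧
    Set.BijOn (Hfun σ μ q ε) (Set.Ioo 0 (kstar σ μ q)) (Set.Iio ε) := by
  have hσ₀ := hσ.ne'
  refine ⟨fun s hs => intervalIntegrable_integrand hσ₀ hq hqμ hs.1.le hs.2,
    contDiffOn_Hfun ε hσ₀ hq hqμ, (strictAntiOn_Hfun ε hσ₀ hq hqμ).mono Ioo_subset_Ico_self,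
    tendsto_Hfun_zero ε hσ₀ hq hqμ, tendsto_Hfun_kstar ε hσ₀ hq hqμ, ?_⟩
  simpa only [Hfun_zero] using bijOn_Ioo_Iio_of_strictAntiOn (kstar_pos hσ₀ hq hqμ)
    (strictAntiOn_Hfun ε hσ₀ hq hqμ) (continuousOn_Hfun ε hσ₀ hq hqμ)
    (tendsto_Hfun_kstar ε hσ₀ hq hqμ)
end
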